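/- A formal sum of monomials f = Σ_{u∈ℤⁿ} c_u z^u over the Novikov field (where z^u denotes the function x ↦ t^{Σ uᵢxᵢ} and c_u ∈ Λ) that converges on an open set U ⊂ ℝⁿ and vanishes identically as a function on an open subset V ⊂ U is the zero sum: all c_u = 0. -/
import Mathlib


open scoped BigOperators

set_option linter.unusedVariables false

open MeasureTheory

lemma hyperplane_volume_zero {n : ℕ} (a : Fin n → ℝ) (ha : a ≠ 0) (r : ℝ) :
    volume {x : Fin n → ℝ | ∑ i, a i * x i = r} = 0 := by
  obtain ⟨i, hi⟩ : ∃ i, a i ≠ 0 := by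
    by_contra h
    push_neg at h
    exact ha (funext h)
  set l : (Fin n → ℝ) →ₗ[ℝ] ℝ := ∑ j, a j • LinearMap.proj j with hl
  have hlapp : ∀ x : Fin n → ℝ, l x = ∑ j, a j * x j := by
    intro x
    simp [hl, LinearMap.sum_apply, LinearMap.smul_apply, LinearMap.proj_apply, smul_eq_mul]
  have hsingle : ∀ t : ℝ, l (((t / a i) • (Pi.single i 1 : Fin n → ℝ) : Fin n → ℝ)) = t := by
    intro t
    rw [hlapp]
    rw [Finset.sum_eq_single i]
    · simp only [Pi.smul_apply, Pi.single_eq_same, smul_eq_mul, mul_one]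
      field_simp
    · intro j _ hj
      simp [Pi.single_apply, hj]
    · simp
  set x₀ : Fin n → ℝ := ((r / a i) • (Pi.single i 1 : Fin n → ℝ) : Fin n → ℝ) with hx₀
  set s : AffineSubspace ℝ (Fin n → ℝ) := AffineSubspace.mk' x₀ (LinearMap.ker l) with hs
  have hcoe : (s : Set (Fin n → ℝ)) = {x | ∑ j, a j * x j = r} := by
    ext x
    simp only [hs, SetLike.mem_coe, AffineSubspace.mem_mk', vsub_eq_sub,
      LinearMap.mem_ker, map_sub, Set.mem_setOf_eq]
    rw [hsingle r, ← hlapp]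
    constructor
    · intro h; linarith [sub_eq_zero.mp h]
    · intro h; rw [h]; ring
  have hne : s ≠ ⊤ := by
    intro htop
    have hmem : (((r + 1) / a i) • (Pi.single i 1 : Fin n → ℝ) : Fin n → ℝ) ∈ (s : Set (Fin n → ℝ)) := by
      rw [htop]; simp
    rw [hcoe] at hmem
    have := hmem
    simp only [Set.mem_setOf_eq] at this
    rw [← hlapp, hsingle] at this
    linarith
  rw [← hcoe]
  exact Measure.addHaar_affineSubspace volume s hne

lemma exists_generic {n : ℕ} (W : Set (Fin n → ℝ)) (hW : IsOpen W) (hWne : W.Nonempty)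
    (S : Set ((Fin n → ℝ) × ℝ)) (hS : S.Finite) (h0 : ∀ p ∈ S, p.1 ≠ 0) :
    ∃ x ∈ W, ∀ p ∈ S, ∑ i, p.1 i * x i ≠ p.2 := by
  have hZ : volume (⋃ p ∈ S, {x : Fin n → ℝ | ∑ i, p.1 i * x i = p.2}) = 0 :=
    (measure_biUnion_null_iff hS.countable).mpr fun p hp =>
      hyperplane_volume_zero _ (h0 p hp) _
  have hpos : 0 < volume W := hW.measure_pos volume hWne
  have hnee : (W \ ⋃ p ∈ S, {x : Fin n → ℝ | ∑ i, p.1 i * x i = p.2}).Nonempty := by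
    rw [Set.nonempty_iff_ne_empty]
    intro h
    have hsub : W ⊆ ⋃ p ∈ S, {x : Fin n → ℝ | ∑ i, p.1 i * x i = p.2} :=
      Set.diff_eq_empty.mp h
    exact absurd (le_trans (measure_mono hsub) (le_of_eq hZ)) (not_le.mpr hpos)
  obtain ⟨x, hxW, hxZ⟩ := hnee
  exact ⟨x, hxW, fun p hp heq => hxZ (Set.mem_biUnion hp heq)⟩


/-- Uniqueness of analytic expansions over the Novikov field: a formal sum of
monomials `f = Σ_{u ∈ ℤⁿ} c_u z^u` (with `c_u` in the Novikov field, realized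
as Hahn series over `ℝ` with coefficients in `ℂ`, and `z^u` the function
`x ↦ t^{Σ uᵢ xᵢ}`) which converges on an open set `U` (for each `x ∈ U` and
each bound `E`, only finitely many monomials have valuation `≤ E` at `x`) and
vanishes identically as a function on a nonempty open subset `V ⊆ U` (every
coefficient of the evaluated series is zero at every point of `V`) is the zero
sum: `c_u = 0` for all `u`. -/
theorem novikov_analytic_expansion_unique
    (n : ℕ) (U V : Set (Fin n → ℝ)) (hU : IsOpen U) (hV : IsOpen V)
    (hVU : V ⊆ U) (hVne : V.Nonempty)
    (c : (Fin n → ℤ) → HahnSeries ℝ ℂ)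
    (hnov : ∀ u : Fin n → ℤ, ∀ E : ℝ, {r : ℝ | r ≤ E ∧ (c u).coeff r ≠ 0}.Finite)
    (hconv : ∀ x ∈ U, ∀ E : ℝ,
      {u : Fin n → ℤ | ∃ r : ℝ, (c u).coeff r ≠ 0 ∧
        r + ∑ i, (u i : ℝ) * x i ≤ E}.Finite)
    (hvanish : ∀ x ∈ V, ∀ ρ : ℝ,
      ∑ᶠ u : Fin n → ℤ, (c u).coeff (ρ - ∑ i, (u i : ℝ) * x i) = 0) :
    ∀ u : Fin n → ℤ, c u = 0 := by
  intro u₀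
  by_contra hc0
  obtain ⟨r₀, hr₀⟩ : ∃ r, (c u₀).coeff r ≠ 0 := by
    by_contra h
    push_neg at h
    apply hc0
    ext r
    simp [h r]
  obtain ⟨xb, hxbV⟩ := hVne
  obtain ⟨δ, hδ, hball⟩ := Metric.isOpen_iff.mp hV xb hxbV
  set ε := δ / 2 with hεdef
  have hεpos : 0 < ε := by positivity
  have hcb : Metric.closedBall xb ε ⊆ V :=
    (Metric.closedBall_subset_ball (by rw [hεdef]; linarith)).trans hball
  -- membership of perturbed points in the closed ball
  have hmemcb : ∀ s : Fin n → ℝ, (∀ i, |s i| = 1) →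
      (fun i => xb i - ε * s i) ∈ Metric.closedBall xb ε := by
    intro s hs
    rw [Metric.mem_closedBall, dist_pi_le_iff hεpos.le]
    intro i
    rw [Real.dist_eq]
    have h1 : (xb i - ε * s i) - xb i = -(ε * s i) := by ring
    rw [h1, abs_neg, abs_mul, hs i, mul_one, abs_of_nonneg hεpos.le]
  set sgn : (Fin n → ℤ) → Fin n → ℝ := fun u i => if 0 ≤ u i then 1 else -1 with hsgn
  have hsgnabs : ∀ u i, |sgn u i| = 1 := by
    intro u i
    rw [hsgn]
    by_cases h : 0 ≤ u i <;> simp [h]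
  set corner : (Fin n → ℤ) → Fin n → ℝ := fun u i => xb i - ε * sgn u i with hcorner
  have hcornercb : ∀ u, corner u ∈ Metric.closedBall xb ε := by
    intro u
    rw [hcorner]
    exact hmemcb (sgn u) (hsgnabs u)
  -- key deviation bound
  have key : ∀ (u : Fin n → ℤ) (x : Fin n → ℝ), x ∈ Metric.closedBall xb ε →
      |∑ i, (u i : ℝ) * x i - ∑ i, (u i : ℝ) * xb i| ≤ ε * ∑ i, |(u i : ℝ)| := by
    intro u x hx
    rw [← Finset.sum_sub_distrib]
    calc |∑ i, ((u i : ℝ) * x i - (u i : ℝ) * xb i)|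
        ≤ ∑ i, |(u i : ℝ) * x i - (u i : ℝ) * xb i| := Finset.abs_sum_le_sum_abs _ _
      _ ≤ ∑ i, |(u i : ℝ)| * ε := by
          apply Finset.sum_le_sum
          intro i _
          rw [← mul_sub, abs_mul]
          refine mul_le_mul_of_nonneg_left ?_ (abs_nonneg _)
          rw [← Real.dist_eq]
          exact le_trans (dist_le_pi_dist x xb i) (Metric.mem_closedBall.mp hx)
      _ = ε * ∑ i, |(u i : ℝ)| := by
          rw [Finset.mul_sum]
          exact Finset.sum_congr rfl fun i _ => mul_comm _ _
  have hcornerval : ∀ u : Fin n → ℤ,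
      ∑ i, (u i : ℝ) * corner u i = ∑ i, (u i : ℝ) * xb i - ε * ∑ i, |(u i : ℝ)| := by
    intro u
    rw [Finset.mul_sum, ← Finset.sum_sub_distrib]
    apply Finset.sum_congr rfl
    intro i _
    by_cases h : 0 ≤ u i
    · have habs : |(u i : ℝ)| = (u i : ℝ) := abs_of_nonneg (by exact_mod_cast h)
      simp only [hcorner, hsgn, if_pos h, habs]
      ring
    · have habs : |(u i : ℝ)| = -(u i : ℝ) := abs_of_neg (by exact_mod_cast not_le.mp h)
      simp only [hcorner, hsgn, if_neg h, habs]
      ring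
  have hcornermin : ∀ (u : Fin n → ℤ) (x : Fin n → ℝ), x ∈ Metric.closedBall xb ε →
      ∑ i, (u i : ℝ) * corner u i ≤ ∑ i, (u i : ℝ) * x i := by
    intro u x hx
    have h1 := (abs_le.mp (key u x hx)).1
    rw [hcornerval u]
    linarith
  set E := r₀ + ∑ i, (u₀ i : ℝ) * xb i + ε * ∑ i, |(u₀ i : ℝ)| with hE
  -- finiteness of relevant u's
  have hA : {u : Fin n → ℤ | ∃ r : ℝ, (c u).coeff r ≠ 0 ∧
      r + ∑ i, (u i : ℝ) * corner u i ≤ E}.Finite := by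
    apply Set.Finite.subset (Set.finite_iUnion (fun σ : Fin n → Bool =>
      hconv (fun i => xb i - ε * (if σ i then 1 else -1))
        (hVU (hcb (hmemcb _ (fun i => by by_cases h : σ i <;> simp [h])))) E))
    intro u hu
    obtain ⟨r, hr1, hr2⟩ := hu
    refine Set.mem_iUnion.mpr ⟨fun i => decide (0 ≤ u i), ⟨r, hr1, ?_⟩⟩
    have heq : ∀ i, (xb i - ε * (if decide (0 ≤ u i) then (1:ℝ) else -1)) = corner u i := by
      intro i
      by_cases h : 0 ≤ u i <;> simp [hcorner, hsgn, h]
    calc r + ∑ i, (u i : ℝ) * (xb i - ε * (if decide (0 ≤ u i) then (1:ℝ) else -1))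
        = r + ∑ i, (u i : ℝ) * corner u i := by
          congr 1
          exact Finset.sum_congr rfl fun i _ => by rw [heq i]
      _ ≤ E := hr2
  -- finiteness of relevant pairs
  set S : Set ((Fin n → ℤ) × ℝ) := {p | (c p.1).coeff p.2 ≠ 0 ∧
      p.2 + ∑ i, (p.1 i : ℝ) * corner p.1 i ≤ E} with hSdef
  have hSfin : S.Finite := by
    apply Set.Finite.subset (Set.Finite.biUnion hA (fun u _ =>
      ((hnov u (E - ∑ i, (u i : ℝ) * corner u i)).image (Prod.mk u))))
    rintro ⟨u, r⟩ ⟨h1, h2⟩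
    exact Set.mem_biUnion ⟨r, h1, h2⟩ ⟨r, ⟨by linarith, h1⟩, rfl⟩
  -- generic point
  set S' : Set ((Fin n → ℝ) × ℝ) :=
    (fun p : (Fin n → ℤ) × ℝ => ((fun i => ((p.1 i : ℝ) - (u₀ i : ℝ))), r₀ - p.2)) ''
      {p ∈ S | p.1 ≠ u₀} with hS'def
  have hS'fin : S'.Finite := (hSfin.subset (Set.sep_subset _ _)).image _
  have h0 : ∀ q ∈ S', q.1 ≠ 0 := by
    rintro ⟨a, t⟩ ⟨⟨u, r⟩, ⟨hpS, hpne⟩, heq⟩ ha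
    apply hpne
    funext i
    have h1 : a = fun i => ((u i : ℝ) - (u₀ i : ℝ)) := (congrArg Prod.fst heq).symm
    have h3 : (fun i => ((u i : ℝ) - (u₀ i : ℝ))) = (0 : Fin n → ℝ) := by
      rw [← h1]; exact ha
    have h2 : ((u i : ℝ) - (u₀ i : ℝ)) = 0 := congrFun h3 i
    exact_mod_cast sub_eq_zero.mp h2
  obtain ⟨x, hxball, hgen⟩ := exists_generic (Metric.ball xb ε) Metric.isOpen_ball
    (Metric.nonempty_ball.mpr hεpos) S' hS'fin h0
  have hxcb : x ∈ Metric.closedBall xb ε := Metric.ball_subset_closedBall hxball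
  have hxV : x ∈ V := hcb hxcb
  set ρ := r₀ + ∑ i, (u₀ i : ℝ) * x i with hρ
  have hρE : ρ ≤ E := by
    have h2 := (abs_le.mp (key u₀ x hxcb)).2
    rw [hρ, hE]
    linarith
  have hzero : ∀ u : Fin n → ℤ, u ≠ u₀ →
      (c u).coeff (ρ - ∑ i, (u i : ℝ) * x i) = 0 := by
    intro u hune
    by_contra hne
    set r := ρ - ∑ i, (u i : ℝ) * x i with hr
    have hpS : (u, r) ∈ S := by
      refine ⟨hne, ?_⟩
      have := hcornermin u x hxcb
      have hrx : r + ∑ i, (u i : ℝ) * x i = ρ := by rw [hr]; ring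
      simp only [hSdef, Set.mem_setOf_eq] at *
      linarith
    have hgen' := hgen _ ⟨(u, r), ⟨hpS, hune⟩, rfl⟩
    apply hgen'
    have hsplit : ∑ i, ((u i : ℝ) - (u₀ i : ℝ)) * x i
        = ∑ i, (u i : ℝ) * x i - ∑ i, (u₀ i : ℝ) * x i := by
      rw [← Finset.sum_sub_distrib]
      exact Finset.sum_congr rfl fun i _ => by ring
    simp only []
    rw [hsplit]
    have hux : ∑ i, (u i : ℝ) * x i = ρ - r := by rw [hr]; ring
    have hu0x : ∑ i, (u₀ i : ℝ) * x i = ρ - r₀ := by rw [hρ]; ring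
    rw [hux, hu0x]
    ring
  have hfin := hvanish x hxV ρ
  rw [finsum_eq_single _ u₀ hzero] at hfin
  have hcoef : ρ - ∑ i, (u₀ i : ℝ) * x i = r₀ := by rw [hρ]; ring
  rw [hcoef] at hfin
  exact hr₀ hfin
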